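/- arXiv:1710.07935 — 2 statements merged into one kernel-verified Lean document; each statement's English description precedes it below -/
import Mathlib

section
/- Let d and k be natural numbers, let T ⊆ ℝ^d be a compact set with Lebesgue measure μ(T) > 0, and let θ ∈ (0,1]. Then there exists a constant C > 0 (depending only on d, k, θ and T) such that for every polynomial function p : ℝ^d → ℝ of total degree at most k and every Lebesgue-measurable set S ⊆ T with μ(S) ≥ θ·μ(T), one has sup_{x ∈ T} |p(x)| ≤ C · (∫_S p(x)² dμ(x))^{1/2}. -/
/-!
A nonzero polynomial vanishes only on a Lebesgue-null set (induction on the number of variables,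
since a nonzero one-variable polynomial has finitely many roots). Hence for a fixed nonzero `p`
the sublevel sets `{x ∈ T | p x ^ 2 < δ}` have measure less than `θ μ(T) / 2` for small `δ`, and
`∫_S p²` is bounded below uniformly over all admissible `S`. Polynomials of degree at most `k`
form a finite-dimensional space; the functionals `c ↦ ∫_S p_c²` are equicontinuous on its unit
sphere, so compactness makes the lower bound uniform on the sphere, while Banach–Steinhaus bounds
`sup_T |p_c|` by a multiple of `‖c‖`. Homogeneity then gives the inequality.
-/

open MeasureTheory Filter Topology Set
open scoped ENNReal

namespace MvPolynomial

theorem ae_eval_ne_zero : ∀ {n : ℕ} {p : MvPolynomial (Fin n) ℝ}, p ≠ 0 → ∀ᵐ x, eval x p ≠ 0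
  | 0, p, hp => by
    rw [p.eq_C_of_isEmpty] at hp ⊢
    simpa using hp
  | n + 1, p, hp => by
    obtain ⟨j, hj⟩ : ∃ j, (finSuccEquiv ℝ n p).coeff j ≠ 0 := by
      by_contra! h
      exact hp ((finSuccEquiv ℝ n).map_eq_zero_iff.mp (Polynomial.ext h))
    have hmeas : MeasurableSet {z : ℝ × (Fin n → ℝ) | eval (Fin.cons z.1 z.2) p ≠ 0} :=
      (measurableSet_eq_fun ((continuous_eval p).measurable.comp (by fun_prop))
        measurable_const).compl
    have hprod : ∀ᵐ z : ℝ × (Fin n → ℝ), eval (Fin.cons z.1 z.2) p ≠ 0 := by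
      rw [Measure.volume_eq_prod, Measure.ae_prod_iff_ae_ae hmeas, Measure.ae_ae_comm hmeas]
      filter_upwards [ae_eval_ne_zero hj] with x hx
      have hroots : Polynomial.map (eval x) (finSuccEquiv ℝ n p) ≠ 0 := fun h => hx <| by
        simpa using congrArg (Polynomial.coeff · j) h
      refine measure_mono_null (fun y hy => ?_)
        ((Polynomial.finite_setOfPred_isRoot hroots).measure_zero _)
      simpa [eval_eq_eval_mv_eval'] using hy
    simpa using
      (volume_preserving_piFinSuccAbove (fun _ : Fin (n + 1) => ℝ) 0).quasiMeasurePreserving.ae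
        hprod

end MvPolynomial

theorem IsCompact.exists_pos_forall_le {Y ι : Type*} [TopologicalSpace Y] {K : Set Y}
    (hK : IsCompact K) {f : ι → Y → ℝ}
    (hf : ∀ y ∈ K, ∃ ε > 0, ∀ᶠ z in 𝓝[K] y, ∀ i, ε ≤ f i z) :
    ∃ m > 0, ∀ y ∈ K, ∀ i, m ≤ f i y := by
  refine hK.induction_on (p := fun s => ∃ m > 0, ∀ y ∈ s, ∀ i, m ≤ f i y)
    ⟨1, one_pos, by simp⟩ (fun s t hst ⟨m, hm, ht⟩ => ⟨m, hm, fun y hy => ht y (hst hy)⟩)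
    (fun s t ⟨m, hm, hs⟩ ⟨m', hm', ht⟩ => ⟨min m m', lt_min hm hm', fun y hy i => ?_⟩)
    fun y hy => ?_
  · rcases hy with hy | hy
    exacts [(min_le_left _ _).trans (hs y hy i), (min_le_right _ _).trans (ht y hy i)]
  · obtain ⟨ε, hε, hnear⟩ := hf y hy
    exact ⟨_, hnear, ε, hε, fun z hz => hz⟩

section

variable {X E : Type*} [NormedAddCommGroup E] [NormedSpace ℝ E] [FiniteDimensional ℝ E]

theorem exists_pos_forall_abs_le_mul_norm [TopologicalSpace X] (F : E →ₗ[ℝ] X → ℝ)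
    {T : Set X} (hT : IsCompact T) (hF : ∀ c, ContinuousOn (F c) T) :
    ∃ K > 0, ∀ c, ∀ x ∈ T, |F c x| ≤ K * ‖c‖ := by
  let g : T → StrongDual ℝ E := fun x =>
    LinearMap.toContinuousLinearMap (LinearMap.proj (x : X) ∘ₗ F)
  obtain ⟨C, hC⟩ := banach_steinhaus (g := g) fun c =>
    (hT.exists_bound_of_continuousOn (hF c)).imp fun C hC x => hC x x.2
  refine ⟨max C 1, by positivity, fun c x hx => ?_⟩
  calc |F c x| = ‖g ⟨x, hx⟩ c‖ := rfl
    _ ≤ ‖g ⟨x, hx⟩‖ * ‖c‖ := (g ⟨x, hx⟩).le_opNorm c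
    _ ≤ max C 1 * ‖c‖ := by gcongr; exact le_max_of_le_left (hC _)

variable [MeasurableSpace X] {μ : Measure X}

theorem abs_setIntegral_sq_sub_setIntegral_sq_le {f g : X → ℝ} {S : Set X} (hS : μ S ≠ ∞)
    (hf : IntegrableOn (fun x => f x ^ 2) S μ) (hg : IntegrableOn (fun x => g x ^ 2) S μ)
    {M δ : ℝ} (hfM : ∀ x ∈ S, |f x| ≤ M) (hgM : ∀ x ∈ S, |g x| ≤ M)
    (hfg : ∀ x ∈ S, |f x - g x| ≤ δ) :
    |∫ x in S, f x ^ 2 ∂μ - ∫ x in S, g x ^ 2 ∂μ| ≤ 2 * M * δ * μ.real S := by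
  rw [← integral_sub hf hg, ← Real.norm_eq_abs]
  refine norm_setIntegral_le_of_norm_le_const hS.lt_top fun x hx => ?_
  rw [Real.norm_eq_abs, sq_sub_sq, abs_mul]
  have hsum : |f x + g x| ≤ 2 * M := (abs_add_le _ _).trans (by linarith [hfM x hx, hgM x hx])
  exact mul_le_mul hsum (hfg x hx) (abs_nonneg _) ((abs_nonneg _).trans hsum)

theorem exists_pos_le_setIntegral_sq {f : X → ℝ} {T : Set X} (hf : Measurable f)
    (hfT : IntegrableOn (fun x => f x ^ 2) T μ) (hT : μ T ≠ ∞)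
    (hf0 : ∀ᵐ x ∂μ.restrict T, f x ≠ 0) {τ : ℝ≥0∞} (hτ0 : 0 < τ) (hτ : τ ≠ ∞) :
    ∃ ε > 0, ∀ S, MeasurableSet S → S ⊆ T → τ ≤ μ S → ε ≤ ∫ x in S, f x ^ 2 ∂μ := by
  have : IsFiniteMeasure (μ.restrict T) := isFiniteMeasure_restrict.mpr hT
  let sub : ℝ → Set X := fun r => {x | f x ^ 2 < r}
  have hsub : ∀ r, MeasurableSet (sub r) := fun r =>
    measurableSet_lt (by fun_prop) measurable_const
  have hlim : Tendsto (μ.restrict T ∘ sub) (𝓝[>] 0) (𝓝 0) := by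
    have hzero : (⋂ r > (0 : ℝ), sub r) = {x | f x = 0} := by
      ext x
      simp only [sub, mem_iInter, mem_ofPred_eq]
      exact ⟨fun h => pow_eq_zero_iff two_ne_zero |>.mp (le_antisymm (le_of_forall_pos_lt_add
        (by simpa using h)) (sq_nonneg _)), fun h r hr => by simpa [h] using hr⟩
    have h0 : μ.restrict T {x | f x = 0} = 0 := by simpa using ae_iff.mp hf0
    have := tendsto_measure_biInter_gt (μ := μ.restrict T) (fun r _ => (hsub r).nullMeasurableSet)
      (fun _ _ _ hij _ hx => lt_of_lt_of_le hx hij) ⟨1, one_pos, measure_ne_top _ _⟩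
    rwa [hzero, h0] at this
  obtain ⟨δ, hδ, hδ0⟩ : ∃ δ, μ.restrict T (sub δ) < τ / 2 ∧ 0 < δ :=
    ((hlim.eventually (gt_mem_nhds (ENNReal.half_pos hτ0.ne'))).and self_mem_nhdsWithin).exists
  refine ⟨δ * (τ / 2).toReal, mul_pos hδ0 (ENNReal.toReal_pos (ENNReal.half_pos hτ0.ne').ne'
    (ENNReal.div_ne_top hτ two_ne_zero)), fun S hS hST hSτ => ?_⟩
  have hlarge : τ / 2 ≤ μ (S \ sub δ) := by
    by_contra! hsmall
    have hlow : μ (S ∩ sub δ) ≤ μ.restrict T (sub δ) := by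
      rw [Measure.restrict_apply (hsub δ), inter_comm]
      exact measure_mono (inter_subset_inter_right _ hST)
    have := calc μ S = μ (S ∩ sub δ) + μ (S \ sub δ) := (measure_inter_add_sdiff S (hsub δ)).symm
      _ < τ / 2 + τ / 2 := ENNReal.add_lt_add (hlow.trans_lt hδ) hsmall
      _ = τ := ENNReal.add_halves τ
    exact this.not_ge hSτ
  have hfin : μ (S \ sub δ) ≠ ∞ := ne_top_of_le_ne_top hT (measure_mono (sdiff_subset.trans hST))
  calc δ * (τ / 2).toReal ≤ δ * μ.real (S \ sub δ) := by
        gcongr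
        exact ENNReal.toReal_mono hfin hlarge
    _ ≤ ∫ x in S \ sub δ, f x ^ 2 ∂μ :=
        setIntegral_ge_of_const_le_real (hS.diff (hsub δ)) hfin (fun x hx => not_lt.mp hx.2)
          (hfT.mono_set (sdiff_subset.trans hST))
    _ ≤ ∫ x in S, f x ^ 2 ∂μ :=
        setIntegral_mono_set (hfT.mono_set hST) (ae_of_all _ fun x => sq_nonneg _)
          sdiff_subset.eventuallyLE

theorem integrableOn_sq_of_abs_le {f : X → ℝ} {T : Set X} (hf : Measurable f)
    (hTm : MeasurableSet T) (hT : μ T ≠ ∞) {M : ℝ} (hM : ∀ x ∈ T, |f x| ≤ M) :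
    IntegrableOn (fun x => f x ^ 2) T μ :=
  Measure.integrableOn_of_bounded hT (hf.pow_const 2).aestronglyMeasurable
    ((ae_restrict_iff' hTm).mpr (ae_of_all _ fun x hx => by
      rw [Real.norm_eq_abs, abs_pow]; exact pow_le_pow_left₀ (abs_nonneg _) (hM x hx) 2))

theorem exists_pos_mul_norm_sq_le_setIntegral_sq (F : E →ₗ[ℝ] X → ℝ)
    (hF : ∀ c, Measurable (F c)) {T : Set X} (hTm : MeasurableSet T) (hT : μ T ≠ ∞) {K : ℝ}
    (hK : ∀ c, ∀ x ∈ T, |F c x| ≤ K * ‖c‖) (hF0 : ∀ c ≠ 0, ∀ᵐ x ∂μ.restrict T, F c x ≠ 0)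
    {τ : ℝ≥0∞} (hτ0 : 0 < τ) (hτ : τ ≠ ∞) :
    ∃ m > 0, ∀ c S, MeasurableSet S → S ⊆ T → τ ≤ μ S →
      m * ‖c‖ ^ 2 ≤ ∫ x in S, F c x ^ 2 ∂μ := by
  have hint : ∀ c, IntegrableOn (fun x => F c x ^ 2) T μ := fun c =>
    integrableOn_sq_of_abs_le (hF c) hTm hT (hK c)
  obtain ⟨m, hm, hsphere⟩ : ∃ m > 0, ∀ u ∈ Metric.sphere (0 : E) 1,
      ∀ S : {S // MeasurableSet S ∧ S ⊆ T ∧ τ ≤ μ S}, m ≤ ∫ x in S, F u x ^ 2 ∂μ := by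
    refine (isCompact_sphere 0 1).exists_pos_forall_le fun u hu => ?_
    obtain ⟨ε, hε, hεu⟩ := exists_pos_le_setIntegral_sq (hF u) (hint u) hT
      (hF0 u (ne_zero_of_mem_unit_sphere ⟨u, hu⟩)) hτ0 hτ
    have hnear : ∀ᶠ v in 𝓝 u, 2 * K * (K * ‖v - u‖) * μ.real T < ε / 2 := by
      refine ContinuousAt.eventually_lt (by fun_prop) continuousAt_const ?_
      simpa using half_pos hε
    refine ⟨ε / 2, half_pos hε, ?_⟩
    filter_upwards [nhdsWithin_le_nhds hnear, self_mem_nhdsWithin] with v hv hv1 ⟨S, hS, hST, hSτ⟩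
    have hbound : ∀ w ∈ Metric.sphere (0 : E) 1, ∀ x ∈ S, |F w x| ≤ K := fun w hw x hx => by
      simpa [mem_sphere_zero_iff_norm.mp hw] using hK w x (hST hx)
    have hclose := abs_setIntegral_sq_sub_setIntegral_sq_le (μ := μ)
      (ne_top_of_le_ne_top hT (measure_mono hST)) ((hint v).mono_set hST) ((hint u).mono_set hST)
      (hbound v hv1) (hbound u hu) (fun x hx => by simpa using hK (v - u) x (hST hx))
    have : 2 * K * (K * ‖v - u‖) * μ.real S ≤ 2 * K * (K * ‖v - u‖) * μ.real T := by
      have := mul_nonneg (mul_self_nonneg K) (norm_nonneg (v - u))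
      gcongr
      linarith
    linarith [(abs_le.mp hclose).1, hεu S hS hST hSτ]
  refine ⟨m, hm, fun c S hS hST hSτ => ?_⟩
  rcases eq_or_ne c 0 with rfl | hc
  · simp
  have hscale : ∫ x in S, F c x ^ 2 ∂μ = ‖c‖ ^ 2 * ∫ x in S, F (‖c‖⁻¹ • c) x ^ 2 ∂μ := by
    rw [← integral_const_mul]
    congr 1 with x
    simp [field]
  rw [hscale, mul_comm m]
  gcongr
  refine hsphere _ ?_ ⟨S, hS, hST, hSτ⟩
  rw [mem_sphere_zero_iff_norm, norm_smul, norm_inv, norm_norm,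
    inv_mul_cancel₀ (norm_ne_zero_iff.mpr hc)]

theorem exists_pos_forall_abs_le_mul_sqrt_setIntegral_sq [TopologicalSpace X] [T2Space X]
    [OpensMeasurableSpace X] [IsFiniteMeasureOnCompacts μ] (F : E →ₗ[ℝ] X → ℝ)
    (hF : ∀ c, Continuous (F c)) (hF0 : ∀ c ≠ 0, ∀ᵐ x ∂μ, F c x ≠ 0) {T : Set X}
    (hT : IsCompact T) {τ : ℝ≥0∞} (hτ0 : 0 < τ) (hτ : τ ≠ ∞) :
    ∃ C > 0, ∀ c S, MeasurableSet S → S ⊆ T → τ ≤ μ S →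
      ∀ x ∈ T, |F c x| ≤ C * √(∫ x in S, F c x ^ 2 ∂μ) := by
  obtain ⟨K, hK0, hK⟩ := exists_pos_forall_abs_le_mul_norm F hT fun c => (hF c).continuousOn
  obtain ⟨m, hm, hmS⟩ := exists_pos_mul_norm_sq_le_setIntegral_sq F (fun c => (hF c).measurable)
    hT.measurableSet hT.measure_lt_top.ne hK (fun c hc => ae_restrict_of_ae (hF0 c hc)) hτ0 hτ
  refine ⟨K / √m, by positivity, fun c S hS hST hSτ x hx => ?_⟩
  calc |F c x| ≤ K * ‖c‖ := hK c x hx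
    _ = K / √m * √(m * ‖c‖ ^ 2) := by
      rw [Real.sqrt_mul hm.le, Real.sqrt_sq (norm_nonneg c)]
      field_simp
    _ ≤ K / √m * √(∫ x in S, F c x ^ 2 ∂μ) := by
      gcongr
      exact hmS c S hS hST hSτ

end

theorem MvPolynomial.exists_pos_forall_abs_eval_le_mul_sqrt_setIntegral_sq {d : ℕ}
    (V : Submodule ℝ (MvPolynomial (Fin d) ℝ)) [FiniteDimensional ℝ V] {T : Set (Fin d → ℝ)}
    (hT : IsCompact T) {τ : ℝ≥0∞} (hτ0 : 0 < τ) (hτ : τ ≠ ∞) :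
    ∃ C > 0, ∀ p ∈ V, ∀ S, MeasurableSet S → S ⊆ T → τ ≤ volume S →
      ∀ x ∈ T, |eval x p| ≤ C * √(∫ x in S, eval x p ^ 2) := by
  -- `V` carries no norm; coordinates in a basis provide one.
  let b := Module.finBasis ℝ V
  let P := V.subtype ∘ₗ b.equivFun.symm.toLinearMap
  have hP : Function.Injective P := V.injective_subtype.comp b.equivFun.symm.injective
  let F := LinearMap.pi (fun x : Fin d → ℝ => (aeval x).toLinearMap) ∘ₗ P
  obtain ⟨C, hC, hCF⟩ := exists_pos_forall_abs_le_mul_sqrt_setIntegral_sq F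
    (fun c => continuous_eval _) (fun c hc => ae_eval_ne_zero ((map_ne_zero_iff P hP).mpr hc))
    hT hτ0 hτ
  refine ⟨C, hC, fun p hp S hS hST hSτ x hx => ?_⟩
  have hFp : ∀ y, F (b.equivFun ⟨p, hp⟩) y = eval y p := fun y => by simp [F, P]
  simpa only [hFp] using hCF (b.equivFun ⟨p, hp⟩) S hS hST hSτ x hx

/-- Proposition A0 of the paper, reference-element form.
If `T ⊆ ℝ^d` is compact with positive Lebesgue measure and `θ ∈ (0,1]`, then there is a
constant `C > 0` such that for every polynomial `p` of total degree at most `k` and every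
measurable `S ⊆ T` with `μ S ≥ θ·μ T`, one has
`sup_{x ∈ T} |p x| ≤ C · (∫_S p² dμ)^{1/2}`. -/
theorem statement_0 (d k : ℕ) (T : Set (Fin d → ℝ)) (hTcomp : IsCompact T)
    (hT0 : 0 < volume T) (θ : ℝ) (hθ : θ ∈ Set.Ioc (0 : ℝ) 1) :
    ∃ C : ℝ, 0 < C ∧
      ∀ p : MvPolynomial (Fin d) ℝ, p.totalDegree ≤ k →
        ∀ S : Set (Fin d → ℝ), MeasurableSet S → S ⊆ T →
          ENNReal.ofReal θ * volume T ≤ volume S →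
          (⨆ x ∈ T, |MvPolynomial.eval x p|) ≤
            C * Real.sqrt (∫ x in S, (MvPolynomial.eval x p) ^ 2) := by
  obtain ⟨C, hC, hCp⟩ := MvPolynomial.exists_pos_forall_abs_eval_le_mul_sqrt_setIntegral_sq
    (MvPolynomial.restrictTotalDegree (Fin d) ℝ k) hTcomp
    (ENNReal.mul_pos (ENNReal.ofReal_pos.mpr hθ.1).ne' hT0.ne')
    (ENNReal.mul_ne_top ENNReal.ofReal_ne_top hTcomp.measure_lt_top.ne)
  refine ⟨C, hC, fun p hp S hS hST hSτ => ?_⟩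
  have hp' := (MvPolynomial.mem_restrictTotalDegree _ _ p).mpr hp
  have hrhs : 0 ≤ C * √(∫ x in S, MvPolynomial.eval x p ^ 2) := by positivity
  exact Real.iSup_le (fun x => Real.iSup_le (fun hx => hCp p hp' S hS hST hSτ x hx) hrhs) hrhs
end

section
/- Let T ⊆ ℝ^d be a Lebesgue-measurable set with 0 < μ(T) < ∞, let θ ∈ (0,1], and let p : ℝ^d → ℝ be a nonzero polynomial function. Then there exists a constant c > 0 such that for every Lebesgue-measurable set S ⊆ T with μ(S) ≥ θ·μ(T), one has ∫_S p(x)² dμ(x) ≥ c. Equivalently, N_θ(p) > 0. -/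
open MeasureTheory ENNReal

/-- The functional `N_θ(f) = inf { (∫_S f² dμ)^{1/2} : S ⊆ T measurable, μ S ≥ θ·μ T }`
from the proof of Proposition A0 of the paper (extended-real-valued version, using the
lower Lebesgue integral). -/
noncomputable def NthetaL (d : ℕ) (T : Set (Fin d → ℝ)) (θ : ℝ)
    (f : (Fin d → ℝ) → ℝ) : ℝ≥0∞ :=
  sInf {r : ℝ≥0∞ | ∃ S : Set (Fin d → ℝ), MeasurableSet S ∧ S ⊆ T ∧
    ENNReal.ofReal θ * volume T ≤ volume S ∧
    r = (∫⁻ x in S, ENNReal.ofReal (f x ^ 2)) ^ ((1 : ℝ) / 2)}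

/-!
The zero set of a nonzero polynomial is Lebesgue-null (induction on the number of variables via
Fubini: for almost every value of the last `d - 1` coordinates the leading coefficient in the first
variable does not vanish, leaving finitely many roots). Hence `T ∩ {p² < ε}` has measure below
`θ μ(T)` once `ε` is small, by continuity of measure from above, and every admissible `S` keeps a
part of measure at least `θ μ(T) - μ(T ∩ {p² < ε})` on which `p² ≥ ε`.
-/

namespace MvPolynomial

theorem finite_setOf_eval_cons_eq_zero {R : Type*} [CommRing R] [IsDomain R] {n : ℕ}
    {p : MvPolynomial (Fin (n + 1)) R} {s : Fin n → R}
    (hs : eval s (finSuccEquiv R n p).leadingCoeff ≠ 0) :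
    {y : R | eval (Fin.cons y s) p = 0}.Finite := by
  have hne : (finSuccEquiv R n p).map (eval s) ≠ 0 := fun h => hs <| by
    rw [← Polynomial.leadingCoeff_map_of_leadingCoeff_ne_zero _ hs, h,
      Polynomial.leadingCoeff_zero]
  simpa only [eval_eq_eval_mv_eval', Polynomial.IsRoot.def] using
    Polynomial.finite_setOfPred_isRoot hne

theorem volume_setOf_eval_eq_zero {n : ℕ} {p : MvPolynomial (Fin n) ℝ} (hp : p ≠ 0) :
    volume {x | eval x p = 0} = 0 := by
  induction n with
  | zero =>
    obtain ⟨a, rfl⟩ := C_surjective (Fin 0) p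
    have ha : a ≠ 0 := by rintro rfl; exact hp C_0
    simp [ha]
  | succ n ih =>
    let e := (MeasurableEquiv.piFinSuccAbove (fun _ : Fin (n + 1) => ℝ) 0).trans
      MeasurableEquiv.prodComm
    have he : MeasurePreserving e.symm (volume.prod volume) volume :=
      (Measure.measurePreserving_swap.comp
        (volume_preserving_piFinSuccAbove (fun _ : Fin (n + 1) => ℝ) 0)).symm e
    have hZ : MeasurableSet {x : Fin (n + 1) → ℝ | eval x p = 0} :=
      (isClosed_eq (continuous_eval p) continuous_const).measurableSet
    rw [← he.measure_preimage_equiv]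
    refine Measure.measure_prod_null_of_ae_null (e.symm.measurable hZ) ?_
    have hlc : ∀ᵐ s : Fin n → ℝ, eval s (finSuccEquiv ℝ n p).leadingCoeff ≠ 0 :=
      ae_iff.2 (by simpa using ih (by simpa using hp))
    filter_upwards [hlc] with s hs
    simp only [e, MeasurableEquiv.trans_symm, MeasurableEquiv.trans_apply, Set.preimage_ofPred_eq,
      MeasurableEquiv.piFinSuccAbove_symm_apply, Fin.insertNthEquiv_zero, Pi.zero_apply]
    exact (finite_setOf_eval_cons_eq_zero hs).measure_zero volume

end MvPolynomial

section UniformLowerBound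

open scoped NNReal

variable {α : Type*} [MeasurableSpace α] {μ : Measure α} {f : α → ℝ≥0∞} {T : Set α}

theorem exists_measure_inter_setOf_lt_lt (hT : MeasurableSet T) (hTfin : μ T ≠ ⊤)
    (hf : Measurable f) (hf0 : μ (T ∩ {x | f x = 0}) = 0) {b : ℝ≥0∞} (hb : 0 < b) :
    ∃ ε : ℝ≥0∞, 0 < ε ∧ ε ≠ ⊤ ∧ μ (T ∩ {x | f x < ε}) < b := by
  set D : ℕ → Set α := fun n => T ∩ {x | f x < (n : ℝ≥0∞)⁻¹}
  have hD_anti : Antitone D := fun m n hmn =>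
    Set.inter_subset_inter_right T fun x hx =>
      lt_of_lt_of_le hx (ENNReal.inv_le_inv.2 (Nat.cast_le.2 hmn))
  have hD_iInter : (⋂ n, D n) ⊆ T ∩ {x | f x = 0} := by
    intro x hx
    simp only [D, Set.mem_iInter, Set.mem_inter_iff, Set.mem_ofPred_eq] at hx
    refine ⟨(hx 0).1, by_contra fun hfx => ?_⟩
    obtain ⟨n, hn⟩ := ENNReal.exists_inv_nat_lt hfx
    exact (hx n).2.not_gt hn
  have hD_lim : Filter.Tendsto (μ ∘ D) Filter.atTop (nhds (μ (⋂ n, D n))) :=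
    tendsto_measure_iInter_atTop
      (fun n => (hT.inter (measurableSet_lt hf measurable_const)).nullMeasurableSet) hD_anti
      ⟨0, ne_top_of_le_ne_top hTfin (measure_mono Set.inter_subset_left)⟩
  rw [measure_mono_null hD_iInter hf0] at hD_lim
  obtain ⟨n, hn, hn1⟩ :=
    ((hD_lim.eventually_lt_const hb).and (Filter.eventually_ge_atTop 1)).exists
  exact ⟨(n : ℝ≥0∞)⁻¹, ENNReal.inv_pos.2 (natCast_ne_top n),
    ENNReal.inv_ne_top.2 (Nat.cast_ne_zero.2 (by omega)), hn⟩

theorem exists_pos_le_setLIntegral_of_le_measure (hT : MeasurableSet T) (hTfin : μ T ≠ ⊤)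
    (hf : Measurable f) (hf0 : μ (T ∩ {x | f x = 0}) = 0) {b : ℝ≥0∞} (hb : 0 < b)
    (hb_top : b ≠ ⊤) :
    ∃ c : ℝ≥0, 0 < c ∧ ∀ S ⊆ T, b ≤ μ S → (c : ℝ≥0∞) ≤ ∫⁻ x in S, f x ∂μ := by
  obtain ⟨ε, hε, hε_top, hD⟩ := exists_measure_inter_setOf_lt_lt hT hTfin hf hf0 hb
  set D := T ∩ {x | f x < ε}
  have hc_top : ε * (b - μ D) ≠ ⊤ :=
    mul_ne_top hε_top (ne_top_of_le_ne_top hb_top tsub_le_self)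
  have hc_ne_zero : ε * (b - μ D) ≠ 0 := mul_ne_zero hε.ne' (tsub_pos_of_lt hD).ne'
  refine ⟨(ε * (b - μ D)).toNNReal, ENNReal.toNNReal_pos hc_ne_zero hc_top, fun S hST hbS => ?_⟩
  have hS_cover : μ S ≤ μ (S ∩ {x | ε ≤ f x}) + μ D := by
    refine (measure_mono fun x hx => ?_).trans (measure_union_le _ _)
    rcases le_or_gt ε (f x) with h | h
    exacts [Or.inl ⟨hx, h⟩, Or.inr ⟨hST hx, h⟩]
  rw [ENNReal.coe_toNNReal hc_top]
  calc ε * (b - μ D) ≤ ε * μ (S ∩ {x | ε ≤ f x}) :=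
        mul_le_mul_right (tsub_le_iff_right.2 (hbS.trans hS_cover)) ε
    _ = ε * μ.restrict S {x | ε ≤ f x} := by
        rw [Measure.restrict_apply (measurableSet_le measurable_const hf), Set.inter_comm]
    _ ≤ ∫⁻ x in S, f x ∂μ := mul_meas_ge_le_lintegral hf ε

end UniformLowerBound

theorem NthetaL_pos_of_le_setLIntegral {d : ℕ} {T : Set (Fin d → ℝ)} {θ : ℝ}
    {f : (Fin d → ℝ) → ℝ} {c : ℝ≥0∞} (hc : 0 < c)
    (hcS : ∀ S ⊆ T, ENNReal.ofReal θ * volume T ≤ volume S →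
      c ≤ ∫⁻ x in S, ENNReal.ofReal (f x ^ 2)) :
    0 < NthetaL d T θ f :=
  calc 0 < c ^ ((1 : ℝ) / 2) := ENNReal.rpow_pos_of_nonneg hc (by norm_num)
    _ ≤ NthetaL d T θ f := by
        refine le_sInf ?_
        rintro r ⟨S, -, hST, hθS, rfl⟩
        exact ENNReal.rpow_le_rpow (hcS S hST hθS) (by norm_num)

/-- the positivity claim `α > 0` in the proof of Proposition A0 of the
paper. If `T` is measurable with `0 < μ T < ∞`, `θ ∈ (0,1]` and `p` is a nonzero
polynomial, then there is `c > 0` with `∫_S p² dμ ≥ c` for every measurable `S ⊆ T`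
with `μ S ≥ θ·μ T`; equivalently, `N_θ(p) > 0`. -/
theorem statement_3 (d : ℕ) (T : Set (Fin d → ℝ)) (hT : MeasurableSet T)
    (hT0 : 0 < volume T) (hTfin : volume T ≠ ⊤) (θ : ℝ) (hθ : θ ∈ Set.Ioc (0 : ℝ) 1)
    (p : MvPolynomial (Fin d) ℝ) (hp : p ≠ 0) :
    (∃ c : ℝ, 0 < c ∧
      ∀ S : Set (Fin d → ℝ), MeasurableSet S → S ⊆ T →
        ENNReal.ofReal θ * volume T ≤ volume S →
        ENNReal.ofReal c ≤ ∫⁻ x in S, ENNReal.ofReal ((MvPolynomial.eval x p) ^ 2)) ∧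
    0 < NthetaL d T θ (fun x => MvPolynomial.eval x p) := by
  have hf : Measurable fun x => ENNReal.ofReal (MvPolynomial.eval x p ^ 2) :=
    ENNReal.measurable_ofReal.comp ((MvPolynomial.continuous_eval p).pow 2).measurable
  have hf0 : volume (T ∩ {x | ENNReal.ofReal (MvPolynomial.eval x p ^ 2) = 0}) = 0 :=
    measure_mono_null (fun x hx => by simpa using hx.2)
      (MvPolynomial.volume_setOf_eval_eq_zero hp)
  have hb : 0 < ENNReal.ofReal θ * volume T := mul_pos (ENNReal.ofReal_pos.2 hθ.1).ne' hT0.ne'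
  obtain ⟨c, hc, hcS⟩ := exists_pos_le_setLIntegral_of_le_measure hT hTfin hf hf0 hb
    (mul_ne_top ofReal_ne_top hTfin)
  refine ⟨⟨c, hc, fun S _ hST hθS => ?_⟩,
    NthetaL_pos_of_le_setLIntegral (coe_pos.2 hc) hcS⟩
  rw [ofReal_coe_nnreal]
  exact hcS S hST hθS
end
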